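/- arXiv:2504.20018 — 6 statements merged into one kernel-verified Lean document; each statement's English description precedes it below -/
import Mathlib

section
/- Forward direction of the set-cover-to-query-planning reduction: suppose C ⊆ Fin d is a set cover of size at most t, i.e. |C| ≤ t and ⋃_{i ∈ C} s_i = Fin n. Define ek : Fin d → ℕ by ek_i = n if i ∈ C and ek_i = 0 otherwise. Then the plan ek has 100% recall (that is, ⋃_{i : ek_i ≥ n} s_i = Fin n) and its total cost satisfies totalCost(ek) = |C|·(2n + 1 + d·n) ≤ t·(2n + 1 + d·n). -/
open scoped BigOperators

/-- Per-index scan cost: `cost n e = 0` if `e = 0`, `n` if `1 ≤ e ≤ n-1`,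
`2n+1` if `e = n`, and `⊤` if `e ≥ n+1`. -/
def cost (n e : ℕ) : ℕ∞ :=
  if e = 0 then 0
  else if e < n then (n : ℕ∞)
  else if e = n then ((2 * n + 1 : ℕ) : ℕ∞)
  else ⊤

/-- Total plan cost: scan cost plus re-ranking cost `d * ek i` for each index. -/
def totalCost (n d : ℕ) (ek : Fin d → ℕ) : ℕ∞ :=
  ∑ i : Fin d, (cost n (ek i) + ((d * ek i : ℕ) : ℕ∞))

theorem setCover_to_queryPlanning_forward
    (n d t : ℕ) (hn : 1 ≤ n) (s : Fin d → Finset (Fin n))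
    (C : Finset (Fin d)) (hC_card : C.card ≤ t)
    (hC_cover : C.biUnion s = Finset.univ) :
    (Finset.univ.filter fun i => n ≤ (if i ∈ C then n else 0)).biUnion s = Finset.univ ∧
    totalCost n d (fun i => if i ∈ C then n else 0)
      = ((C.card * (2 * n + 1 + d * n) : ℕ) : ℕ∞) ∧
    totalCost n d (fun i => if i ∈ C then n else 0)
      ≤ ((t * (2 * n + 1 + d * n) : ℕ) : ℕ∞) := by
  have hfilt : (Finset.univ.filter fun i => n ≤ (if i ∈ C then n else 0)) = C := by
    ext i
    simp only [Finset.mem_filter, Finset.mem_univ, true_and]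
    by_cases h : i ∈ C <;> simp [h, Nat.lt_of_lt_of_le Nat.zero_lt_one hn, hn]
    omega
  have hterm : ∀ i : Fin d,
      cost n (if i ∈ C then n else 0) + ((d * (if i ∈ C then n else 0) : ℕ) : ℕ∞)
        = if i ∈ C then ((2 * n + 1 + d * n : ℕ) : ℕ∞) else 0 := by
    intro i
    by_cases h : i ∈ C
    · simp only [h, if_true, cost]
      have h1 : n ≠ 0 := by omega
      rw [if_neg h1, if_neg (lt_irrefl n)]
      push_cast; ring
    · simp [h, cost]
  have heq : totalCost n d (fun i => if i ∈ C then n else 0)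
      = ((C.card * (2 * n + 1 + d * n) : ℕ) : ℕ∞) := by
    unfold totalCost
    rw [Finset.sum_congr rfl fun i _ => hterm i]
    rw [Finset.sum_ite_mem, Finset.univ_inter, Finset.sum_const]
    push_cast
    ring
  rw [hfilt, heq]
  refine ⟨hC_cover, rfl, ?_⟩
  exact_mod_cast Nat.mul_le_mul_right _ hC_card
end

section
/- Backward direction of the set-cover-to-query-planning reduction: suppose ek : Fin d → ℕ has 100% recall (that is, ⋃_{i : ek_i ≥ n} s_i = Fin n) and totalCost(ek) ≤ t·(2n + 1 + d·n). Then C := {i : Fin d | ek_i ≥ n} is a set cover with |C| ≤ t, i.e. ⋃_{i ∈ C} s_i = Fin n and |C| ≤ t. -/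
open scoped BigOperators

theorem setCover_to_queryPlanning_backward
    (n d t : ℕ) (hn : 1 ≤ n) (s : Fin d → Finset (Fin n))
    (ek : Fin d → ℕ)
    (hrecall : (Finset.univ.filter fun i => n ≤ ek i).biUnion s = Finset.univ)
    (hcost : totalCost n d ek ≤ ((t * (2 * n + 1 + d * n) : ℕ) : ℕ∞)) :
    (Finset.univ.filter fun i => n ≤ ek i).biUnion s = Finset.univ ∧
    (Finset.univ.filter fun i => n ≤ ek i).card ≤ t := by
  refine ⟨hrecall, ?_⟩
  set C := Finset.univ.filter fun i => n ≤ ek i with hC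
  -- total cost is finite
  have hfin : totalCost n d ek ≠ ⊤ := by
    intro h
    rw [h] at hcost
    exact (ENat.coe_ne_top _) (top_le_iff.mp hcost)
  -- each term is finite
  have hterm : ∀ i : Fin d, cost n (ek i) ≠ ⊤ := by
    intro i hi
    apply hfin
    have hle : cost n (ek i) + ((d * ek i : ℕ) : ℕ∞) ≤ totalCost n d ek :=
      Finset.single_le_sum (f := fun j => cost n (ek j) + ((d * ek j : ℕ) : ℕ∞))
        (fun j _ => zero_le) (Finset.mem_univ i)
    rw [hi, top_add] at hle
    exact top_le_iff.mp hle
  -- for i ∈ C, ek i = n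
  have hek : ∀ i ∈ C, ek i = n := by
    intro i hi
    have hge : n ≤ ek i := (Finset.mem_filter.mp hi).2
    by_contra h
    have hlt : n < ek i := lt_of_le_of_ne hge (Ne.symm h)
    apply hterm i
    have h0 : ek i ≠ 0 := by omega
    simp [cost, h0, not_lt.mpr hge, Nat.ne_of_gt hlt]
  -- term value on C
  have hval : ∀ i ∈ C, cost n (ek i) + ((d * ek i : ℕ) : ℕ∞)
      = ((2 * n + 1 + d * n : ℕ) : ℕ∞) := by
    intro i hi
    rw [hek i hi]
    have hn0 : n ≠ 0 := by omega
    simp [cost, hn0, Nat.cast_add]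
  -- sum over C lower-bounds total cost
  have hsub : ∑ i ∈ C, (cost n (ek i) + ((d * ek i : ℕ) : ℕ∞)) ≤ totalCost n d ek := by
    apply Finset.sum_le_sum_of_subset (Finset.filter_subset _ _)
  have hsum : ((C.card * (2 * n + 1 + d * n) : ℕ) : ℕ∞)
      ≤ ((t * (2 * n + 1 + d * n) : ℕ) : ℕ∞) := by
    calc ((C.card * (2 * n + 1 + d * n) : ℕ) : ℕ∞)
        = ∑ i ∈ C, (cost n (ek i) + ((d * ek i : ℕ) : ℕ∞)) := by
          rw [Finset.sum_congr rfl hval, Finset.sum_const, nsmul_eq_mul]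
          push_cast; ring
      _ ≤ totalCost n d ek := hsub
      _ ≤ _ := hcost
  have : C.card * (2 * n + 1 + d * n) ≤ t * (2 * n + 1 + d * n) := Nat.cast_le.mp hsum
  have hpos : 0 < 2 * n + 1 + d * n := by omega
  exact Nat.le_of_mul_le_mul_right this hpos
end

section
/- Correctness of the set-cover-to-query-planning reduction (combinatorial core of the NP-hardness of Query Planning): there exists a set cover C ⊆ Fin d with |C| ≤ t and ⋃_{i ∈ C} s_i = Fin n if and only if there exist scan parameters ek : Fin d → ℕ with 100% recall (⋃_{i : ek_i ≥ n} s_i = Fin n) and totalCost(ek) ≤ t·(2n + 1 + d·n). -/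
open scoped BigOperators

lemma cost_n (n : ℕ) (hn : 1 ≤ n) : cost n n = ((2 * n + 1 : ℕ) : ℕ∞) := by
  unfold cost
  rw [if_neg (by omega), if_neg (by omega), if_pos rfl]

theorem setCover_to_queryPlanning_correct
    (n d t : ℕ) (hn : 1 ≤ n) (s : Fin d → Finset (Fin n)) :
    (∃ C : Finset (Fin d), C.card ≤ t ∧ C.biUnion s = Finset.univ) ↔
    (∃ ek : Fin d → ℕ,
      (Finset.univ.filter fun i => n ≤ ek i).biUnion s = Finset.univ ∧
      totalCost n d ek ≤ ((t * (2 * n + 1 + d * n) : ℕ) : ℕ∞)) := by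
  constructor
  · rintro ⟨C, hcard, hcover⟩
    refine ⟨fun i => if i ∈ C then n else 0, ?_, ?_⟩
    · have : (Finset.univ.filter fun i => n ≤ (if i ∈ C then n else 0)) = C := by
        ext i
        by_cases h : i ∈ C <;> simp [h] <;> omega
      rw [this, hcover]
    · have hterm : ∀ i : Fin d,
          cost n (if i ∈ C then n else 0) + ((d * (if i ∈ C then n else 0) : ℕ) : ℕ∞)
            = if i ∈ C then ((2 * n + 1 + d * n : ℕ) : ℕ∞) else 0 := by
        intro i
        by_cases h : i ∈ C
        · rw [if_pos h, if_pos h, cost_n n hn, ← Nat.cast_add]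
        · simp [h, cost]
      rw [totalCost]
      simp only [hterm]
      rw [Finset.sum_ite_mem, Finset.univ_inter, Finset.sum_const, nsmul_eq_mul]
      calc (C.card : ℕ∞) * ((2 * n + 1 + d * n : ℕ) : ℕ∞)
          ≤ (t : ℕ∞) * ((2 * n + 1 + d * n : ℕ) : ℕ∞) := by
            exact mul_le_mul_left (by exact_mod_cast hcard) _
        _ = ((t * (2 * n + 1 + d * n) : ℕ) : ℕ∞) := by push_cast; ring
  · rintro ⟨ek, hcover, hcost⟩
    set C := Finset.univ.filter fun i => n ≤ ek i with hC
    have hfin : ∀ i : Fin d, cost n (ek i) + ((d * ek i : ℕ) : ℕ∞) ≤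
        ((t * (2 * n + 1 + d * n) : ℕ) : ℕ∞) := by
      intro i
      refine le_trans ?_ hcost
      exact Finset.single_le_sum (f := fun i => cost n (ek i) + ((d * ek i : ℕ) : ℕ∞))
        (fun _ _ => zero_le) (Finset.mem_univ i)
    have hekn : ∀ i ∈ C, ek i = n := by
      intro i hi
      have hge : n ≤ ek i := by simpa [hC] using hi
      by_contra h
      have hgt : n < ek i := lt_of_le_of_ne hge (Ne.symm h)
      have htop : cost n (ek i) = ⊤ := by
        unfold cost
        rw [if_neg (by omega), if_neg (by omega), if_neg (by omega)]
      have h2 := hfin i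
      rw [htop, top_add] at h2
      exact ENat.coe_ne_top _ (top_le_iff.mp h2)
    have hsub : ∑ i ∈ C, (cost n (ek i) + ((d * ek i : ℕ) : ℕ∞)) ≤
        totalCost n d ek := by
      exact Finset.sum_le_sum_of_subset (Finset.subset_univ C)
    have hsum : ∑ i ∈ C, (cost n (ek i) + ((d * ek i : ℕ) : ℕ∞))
        = (C.card : ℕ∞) * ((2 * n + 1 + d * n : ℕ) : ℕ∞) := by
      rw [Finset.sum_congr rfl (fun i hi => by
        rw [hekn i hi, cost_n n hn, ← Nat.cast_add])]
      rw [Finset.sum_const, nsmul_eq_mul]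
    have key : (C.card : ℕ∞) * ((2 * n + 1 + d * n : ℕ) : ℕ∞) ≤
        ((t * (2 * n + 1 + d * n) : ℕ) : ℕ∞) := by
      rw [← hsum]; exact le_trans hsub hcost
    have hcard : C.card ≤ t := by
      have : ((C.card * (2 * n + 1 + d * n) : ℕ) : ℕ∞) ≤
          ((t * (2 * n + 1 + d * n) : ℕ) : ℕ∞) := by
        push_cast at key ⊢; exact key
      have hnat : C.card * (2 * n + 1 + d * n) ≤ t * (2 * n + 1 + d * n) :=
        by exact_mod_cast this
      exact Nat.le_of_mul_le_mul_right hnat (by omega)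
    exact ⟨C, hcard, hcover⟩
end

section
/- Equivalence of minimizing latency and maximizing inside edges (combinatorial core of the NP-hardness of Configuration Search): assume k < L. For any two finsets of vertices V₁ and V₂, latency(V₁) ≤ latency(V₂) if and only if |E_in(V₂)| ≤ |E_in(V₁)|. Consequently, among vertex subsets of a fixed size g, a subset maximizes the number of edges inside it if and only if it minimizes the total latency. -/
open scoped BigOperators

/-- Total latency of a configuration given by a vertex subset: each edge with both
endpoints chosen costs the fast latency `k`, and each other edge costs the slow
latency `L`. -/
def latency {V : Type*} [Fintype V] [DecidableEq V]
    (G : SimpleGraph V) [DecidableRel G.Adj] (k L : ℕ) (Vsub : Finset V) : ℕ :=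
  ∑ e ∈ G.edgeFinset, if e ∈ Vsub.sym2 then k else L

/-- Edges of `G` with both endpoints inside `Vsub`. -/
def Ein {V : Type*} [Fintype V] [DecidableEq V]
    (G : SimpleGraph V) [DecidableRel G.Adj] (Vsub : Finset V) : Finset (Sym2 V) :=
  G.edgeFinset.filter (· ∈ Vsub.sym2)

lemma latency_eq {V : Type*} [Fintype V] [DecidableEq V]
    (G : SimpleGraph V) [DecidableRel G.Adj] (k L : ℕ) (hkL : k ≤ L) (Vsub : Finset V) :
    latency G k L Vsub + (L - k) * (Ein G Vsub).card = L * G.edgeFinset.card := by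
  classical
  unfold latency Ein
  rw [Finset.sum_ite, Finset.sum_const, Finset.sum_const]
  set a := (G.edgeFinset.filter (· ∈ Vsub.sym2)).card with ha
  set b := (G.edgeFinset.filter (fun e => ¬ e ∈ Vsub.sym2)).card with hb
  have hab : a + b = G.edgeFinset.card := by
    rw [ha, hb]
    exact Finset.card_filter_add_card_filter_not _
  have h2 : (L - k) * a + k * a = L * a := by
    rw [← Nat.add_mul, Nat.sub_add_cancel hkL]
  simp only [smul_eq_mul]
  rw [mul_comm a k, mul_comm b L, ← hab, Nat.mul_add]
  omega

theorem latency_min_iff_edges_max {V : Type*} [Fintype V] [DecidableEq V]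
    (G : SimpleGraph V) [DecidableRel G.Adj] (k L : ℕ) (hkL : k < L) :
    (∀ V₁ V₂ : Finset V,
      latency G k L V₁ ≤ latency G k L V₂ ↔ (Ein G V₂).card ≤ (Ein G V₁).card) ∧
    (∀ (g : ℕ) (Vsub : Finset V), Vsub.card = g →
      ((∀ V' : Finset V, V'.card = g → (Ein G V').card ≤ (Ein G Vsub).card) ↔
       (∀ V' : Finset V, V'.card = g → latency G k L Vsub ≤ latency G k L V'))) := by
  have key : ∀ V₁ V₂ : Finset V,
      latency G k L V₁ ≤ latency G k L V₂ ↔ (Ein G V₂).card ≤ (Ein G V₁).card := by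
    intro V₁ V₂
    have h₁ := latency_eq G k L hkL.le V₁
    have h₂ := latency_eq G k L hkL.le V₂
    have hd : 0 < L - k := Nat.sub_pos_of_lt hkL
    constructor
    · intro h
      have : (L - k) * (Ein G V₂).card ≤ (L - k) * (Ein G V₁).card := by omega
      exact Nat.le_of_mul_le_mul_left this hd
    · intro h
      have : (L - k) * (Ein G V₂).card ≤ (L - k) * (Ein G V₁).card :=
        Nat.mul_le_mul_left _ h
      omega
  refine ⟨key, fun g Vsub hcard => ?_⟩
  constructor
  · intro h V' hV'
    exact (key Vsub V').mpr (h V' hV')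
  · intro h V' hV'
    exact (key Vsub V').mp (h V' hV')
end

section
/- Relevant extended-k values suffice for a multi-index query plan: for every ek : Fin d → ℕ there exists ek' : Fin d → ℕ such that for every i, ek'_i ≤ ek_i and ek'_i is relevant for index i (i.e. ek'_i = 0 or ek'_i = r_i(g) for some g ∈ G), the covered ground truth is unchanged, ⋃_i cover_i(ek'_i) = ⋃_i cover_i(ek_i), and the total cost does not increase: Σ_i c_i(ek'_i) ≤ Σ_i c_i(ek_i). Hence an optimal query plan may be sought among the at most (|G|+1)^d relevant parameter combinations. -/
open scoped BigOperators

theorem relevant_ek_suffice_multi_index {α : Type*} [DecidableEq α]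
    (G : Finset α) (d : ℕ) (r : Fin d → α → ℕ) (c : Fin d → ℕ → ℕ)
    (hc : ∀ i : Fin d, Monotone (c i)) (ek : Fin d → ℕ) :
    ∃ ek' : Fin d → ℕ,
      (∀ i : Fin d, ek' i ≤ ek i ∧ (ek' i = 0 ∨ ∃ g ∈ G, ek' i = r i g)) ∧
      Finset.univ.biUnion (fun i : Fin d => G.filter fun g => r i g ≤ ek' i)
        = Finset.univ.biUnion (fun i : Fin d => G.filter fun g => r i g ≤ ek i) ∧
      ∑ i : Fin d, c i (ek' i) ≤ ∑ i : Fin d, c i (ek i) := by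
  refine ⟨fun i => (G.filter fun g => r i g ≤ ek i).sup (r i), ?_, ?_, ?_⟩
  · intro i
    constructor
    · exact Finset.sup_le fun g hg => (Finset.mem_filter.mp hg).2
    · rcases (G.filter fun g => r i g ≤ ek i).eq_empty_or_nonempty with h | h
      · left; simp [h]
      · right
        obtain ⟨g, hg, hge⟩ := Finset.exists_mem_eq_sup _ h (r i)
        exact ⟨g, (Finset.mem_filter.mp hg).1, hge⟩
  · ext g
    simp only [Finset.mem_biUnion, Finset.mem_univ, Finset.mem_filter, true_and]
    constructor
    · rintro ⟨i, hg, hle⟩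
      exact ⟨i, hg, hle.trans (Finset.sup_le fun x hx => (Finset.mem_filter.mp hx).2)⟩
    · rintro ⟨i, hg, hle⟩
      exact ⟨i, hg, Finset.le_sup (Finset.mem_filter.mpr ⟨hg, hle⟩)⟩
  · exact Finset.sum_le_sum fun i _ =>
      hc i (Finset.sup_le fun g hg => (Finset.mem_filter.mp hg).2)
end

section
/- Correctness of the dynamic-programming recurrence for query planning: for every i ≥ 1 and every finset cover : Finset α, DP(i, cover) equals the minimum, over all i-tuples (cvr_0, …, cvr_{i−1}) of pairwise disjoint finsets of α whose union is exactly cover, of Σ_{j < i} c(j, cvr_j). -/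
open scoped BigOperators

/-- The dynamic-programming table: `DP c 1 cover = c 0 cover`, and
`DP c (i+1) cover` is the minimum over subsets `cvr ⊆ cover` of
`DP c i (cover \ cvr) + c i cvr`.  (`DP c 0` is junk, set to `⊤`.) -/
noncomputable def DP {α : Type*} [DecidableEq α] (c : ℕ → Finset α → ℕ∞) :
    ℕ → Finset α → ℕ∞
  | 0, _ => ⊤
  | 1, cover => c 0 cover
  | (i + 2), cover =>
      (cover.powerset).inf fun cvr => DP c (i + 1) (cover \ cvr) + c (i + 1) cvr

theorem DP_correct {α : Type*} [DecidableEq α] (c : ℕ → Finset α → ℕ∞)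
    (i : ℕ) (hi : 1 ≤ i) (cover : Finset α) :
    DP c i cover =
      sInf { v : ℕ∞ | ∃ cvr : Fin i → Finset α,
        (∀ j j' : Fin i, j ≠ j' → Disjoint (cvr j) (cvr j')) ∧
        Finset.univ.biUnion cvr = cover ∧
        v = ∑ j : Fin i, c (j : ℕ) (cvr j) } := by
  obtain ⟨n, rfl⟩ : ∃ n, i = n + 1 := ⟨i - 1, (Nat.succ_pred_eq_of_pos hi).symm⟩
  clear hi
  induction n generalizing cover with
  | zero =>
    show c 0 cover = _
    apply le_antisymm
    · apply le_sInf
      rintro v ⟨cvr, -, hunion, rfl⟩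
      have h0 : cvr 0 = cover := by simpa using hunion
      simp [Fin.sum_univ_one, h0]
    · exact sInf_le ⟨fun _ => cover, fun j j' h => absurd (Fin.ext (by omega)) h,
        by simp, by simp⟩
  | succ n ih =>
    show (cover.powerset).inf (fun cvr => DP c (n + 1) (cover \ cvr) + c (n + 1) cvr) = _
    apply le_antisymm
    · apply le_sInf
      rintro v ⟨cvr, hdis, hunion, rfl⟩
      have hsub : cvr (Fin.last (n + 1)) ⊆ cover := by
        rw [← hunion]; exact Finset.subset_biUnion_of_mem _ (Finset.mem_univ _)
      refine le_trans (Finset.inf_le (Finset.mem_powerset.2 hsub)) ?_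
      rw [Fin.sum_univ_castSucc, ih]
      gcongr
      · apply sInf_le
        refine ⟨fun j => cvr j.castSucc, fun j j' h => hdis _ _ (by simpa using h), ?_, rfl⟩
        ext a
        simp only [Finset.mem_biUnion, Finset.mem_univ, true_and, Finset.mem_sdiff, ← hunion]
        constructor
        · rintro ⟨j, hj⟩
          refine ⟨⟨j.castSucc, hj⟩, fun hlast => ?_⟩
          exact Finset.disjoint_left.1 (hdis _ _ (Fin.castSucc_lt_last j).ne) hj hlast
        · rintro ⟨⟨j, hj⟩, hlast⟩
          rcases Fin.eq_castSucc_or_eq_last j with ⟨k, rfl⟩ | rfl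
          · exact ⟨k, hj⟩
          · exact absurd hj hlast
      · simp
    · apply Finset.le_inf
      intro cvr hcvr
      rw [Finset.mem_powerset] at hcvr
      rw [ih]
      set S := { v : ℕ∞ | ∃ d : Fin (n + 1) → Finset α,
        (∀ j j' : Fin (n + 1), j ≠ j' → Disjoint (d j) (d j')) ∧
        Finset.univ.biUnion d = cover \ cvr ∧
        v = ∑ j : Fin (n + 1), c (j : ℕ) (d j) } with hS
      have hne : S.Nonempty := by
        refine ⟨_, fun j => if j = 0 then cover \ cvr else ∅, ?_, ?_, rfl⟩
        · intro j j' h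
          rcases eq_or_ne j 0 with rfl | hj
          · simp [h.symm]
          · simp [hj]
        · ext a
          simp only [Finset.mem_biUnion, Finset.mem_univ, true_and, Finset.mem_sdiff]
          constructor
          · rintro ⟨j, hj⟩
            split_ifs at hj with h
            · simpa using hj
            · simp at hj
          · intro h
            exact ⟨0, by simp [h.1, h.2]⟩
      obtain ⟨d, hd, hu, hw⟩ := csInf_mem hne
      apply sInf_le
      refine ⟨Fin.snoc d cvr, ?_, ?_, ?_⟩
      · intro j j' h
        rcases Fin.eq_castSucc_or_eq_last j with ⟨k, rfl⟩ | rfl <;>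
          rcases Fin.eq_castSucc_or_eq_last j' with ⟨k', rfl⟩ | rfl
        · simpa using hd k k' (by simpa using h)
        · simp only [Fin.snoc_castSucc, Fin.snoc_last]
          have : d k ⊆ cover \ cvr := by
            rw [← hu]; exact Finset.subset_biUnion_of_mem _ (Finset.mem_univ _)
          exact Finset.disjoint_left.2 fun a ha => (Finset.mem_sdiff.1 (this ha)).2
        · simp only [Fin.snoc_castSucc, Fin.snoc_last]
          have : d k' ⊆ cover \ cvr := by
            rw [← hu]; exact Finset.subset_biUnion_of_mem _ (Finset.mem_univ _)
          exact (Finset.disjoint_left.2 fun a ha => (Finset.mem_sdiff.1 (this ha)).2).symm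
        · exact absurd rfl h
      · ext a
        simp only [Finset.mem_biUnion, Finset.mem_univ, true_and]
        constructor
        · rintro ⟨j, hj⟩
          rcases Fin.eq_castSucc_or_eq_last j with ⟨k, rfl⟩ | rfl
          · rw [Fin.snoc_castSucc] at hj
            have : d k ⊆ cover \ cvr := by
              rw [← hu]; exact Finset.subset_biUnion_of_mem _ (Finset.mem_univ _)
            exact (Finset.mem_sdiff.1 (this hj)).1
          · rw [Fin.snoc_last] at hj; exact hcvr hj
        · intro ha
          by_cases h : a ∈ cvr
          · exact ⟨Fin.last _, by simpa using h⟩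
          · have : a ∈ Finset.univ.biUnion d := by rw [hu]; simp [ha, h]
            obtain ⟨j, -, hj⟩ := Finset.mem_biUnion.1 this
            exact ⟨j.castSucc, by simpa using hj⟩
      · rw [Fin.sum_univ_castSucc, hw]
        simp
end
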